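/- For all integers c, the quantity 39993 + 128c − 400c² is never a nonnegative perfect square. -/
import Mathlib

lemma not_sq_aux (n : ℕ) (m : ℤ) (hm : (n : ℤ) = m ^ 2)
    (h : Nat.sqrt n * Nat.sqrt n ≠ n) : False := by
  have key : ((m.natAbs * m.natAbs : ℕ) : ℤ) = (n : ℤ) := by
    rw [Int.natAbs_mul_self, hm, sq]
  have key2 : m.natAbs * m.natAbs = n := by exact_mod_cast key
  have hs := Nat.sqrt_eq' m.natAbs
  rw [sq] at hs
  rw [key2] at hs
  exact h (by rw [hs, key2])

theorem formula_C2_never_square (c : ℤ) :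
    ¬ (0 ≤ 39993 + 128 * c - 400 * c^2 ∧ ∃ m : ℤ, 39993 + 128 * c - 400 * c^2 = m^2) := by
  rintro ⟨h1, m, hm⟩
  have hlo : -9 ≤ c := by nlinarith
  have hhi : c ≤ 10 := by nlinarith
  interval_cases c <;> norm_num at hm <;>
    exact not_sq_aux _ m (by exact_mod_cast hm) (by norm_num)
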